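/- Formal duality is preserved under linear transformations: if periodic configurations P and Q in ℝⁿ are formal duals (P of density δ, Q of density 1/δ), and T : ℝⁿ → ℝⁿ is an invertible linear map, then TP and (Tᵀ)⁻¹Q are formal duals (with densities δ/|det T| and |det T|/δ respectively). -/

import Mathlib

open scoped Real
open Matrix

/-- The Fourier transform with kernel `e^{2πi⟨x,y⟩}`. -/
noncomputable def fourierT (n : ℕ) (f : (Fin n → ℝ) → ℂ) (y : Fin n → ℝ) : ℂ :=
  ∫ x : Fin n → ℝ, f x * Complex.exp ((2 * π * Complex.I) * ((∑ i, x i * y i : ℝ) : ℂ))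

/-- The average pair sum of `f` over the periodic configuration
`Λ+v₁,…,Λ+v_N` with `Λ = B ℤⁿ`. -/
noncomputable def avgPairSum (n N : ℕ) (B : Matrix (Fin n) (Fin n) ℝ)
    (v : Fin N → Fin n → ℝ) (f : (Fin n → ℝ) → ℂ) : ℂ :=
  (1 / (N : ℂ)) * ∑ j, ∑ k,
    ∑' z : Fin n → ℤ, f (B.mulVec (fun i => (z i : ℝ)) + v j - v k)

/-- Formal duality of two periodic configurations, with density ratio `δ`:
for every Schwartz function `f`, the average pair sum of `f` over the first
equals `δ` times the average pair sum of `f̂` over the second. -/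
def IsFormalDual (n N M : ℕ) (B : Matrix (Fin n) (Fin n) ℝ)
    (v : Fin N → Fin n → ℝ) (C : Matrix (Fin n) (Fin n) ℝ)
    (u : Fin M → Fin n → ℝ) (δ : ℝ) : Prop :=
  ∀ f : SchwartzMap (Fin n → ℝ) ℂ,
    avgPairSum n N B v f = (δ : ℂ) * avgPairSum n M C u (fourierT n f)

/-!
Test the duality of `P` and `Q` against `g = f ∘ T`. The lattice sums of `f` over `TP` are those
of `g` over `P`. Since `⟨Tx, T⁻ᵀy⟩ = ⟨x, y⟩`, a change of variables gives
`f̂ (T⁻ᵀ y) = |det T| ĝ y`, so the lattice sums of `f̂` over `T⁻ᵀQ` are `|det T|` times those of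
`ĝ` over `Q`.
-/

open MeasureTheory in
theorem integral_comp_mulVec {ι E : Type*} [Fintype ι] [DecidableEq ι]
    [NormedAddCommGroup E] [NormedSpace ℝ E] {T : Matrix ι ι ℝ} (hT : T.det ≠ 0)
    (h : (ι → ℝ) → E) :
    ∫ x, h (T *ᵥ x) = |T.det|⁻¹ • ∫ y, h y := by
  let e : (ι → ℝ) ≃L[ℝ] (ι → ℝ) :=
    (Matrix.toLinearEquiv' T (T.invertibleOfIsUnitDet hT.isUnit)).toContinuousLinearEquiv
  have hmap : Measure.map e volume = ENNReal.ofReal |T.det⁻¹| • volume :=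
    Real.map_matrix_volume_pi_eq_smul_volume_pi hT
  calc ∫ x, h (T *ᵥ x) = ∫ y, h y ∂(Measure.map e volume) :=
        (e.toHomeomorph.isClosedEmbedding.integral_map h).symm
    _ = |T.det|⁻¹ • ∫ y, h y := by
        rw [hmap, integral_smul_measure, ENNReal.toReal_ofReal (abs_nonneg _), abs_inv]

theorem mulVec_dotProduct_inv_transpose_mulVec {ι : Type*} [Fintype ι] [DecidableEq ι]
    {T : Matrix ι ι ℝ} (hT : T.det ≠ 0) (x q : ι → ℝ) :
    (T *ᵥ x) ⬝ᵥ ((Tᵀ)⁻¹ *ᵥ q) = x ⬝ᵥ q := by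
  rw [← vecMul_transpose, ← dotProduct_mulVec, mulVec_mulVec,
    mul_nonsing_inv _ (by rw [det_transpose]; exact hT.isUnit), one_mulVec]

theorem fourierT_inv_transpose_mulVec (n : ℕ) {T : Matrix (Fin n) (Fin n) ℝ} (hT : T.det ≠ 0)
    (f : (Fin n → ℝ) → ℂ) (q : Fin n → ℝ) :
    fourierT n f ((Tᵀ)⁻¹ *ᵥ q) = ((|T.det| : ℝ) : ℂ) * fourierT n (fun x => f (T *ᵥ x)) q := by
  have hphase : ∀ x, ∑ i, (T *ᵥ x) i * ((Tᵀ)⁻¹ *ᵥ q) i = ∑ i, x i * q i :=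
    fun x => mulVec_dotProduct_inv_transpose_mulVec hT x q
  have habs : ((|T.det| : ℝ) : ℂ) ≠ 0 := by exact_mod_cast abs_ne_zero.mpr hT
  have hcov := integral_comp_mulVec hT
    (fun w => f w * Complex.exp (2 * π * Complex.I * ((∑ i, w i * ((Tᵀ)⁻¹ *ᵥ q) i : ℝ) : ℂ)))
  beta_reduce at hcov
  simp only [fourierT, ← hphase]
  rw [hcov, Complex.real_smul, Complex.ofReal_inv, mul_inv_cancel_left₀ habs]

theorem avgPairSum_mul_mulVec (n N : ℕ) (T B : Matrix (Fin n) (Fin n) ℝ)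
    (v : Fin N → Fin n → ℝ) (f : (Fin n → ℝ) → ℂ) :
    avgPairSum n N (T * B) (fun j => T *ᵥ v j) f = avgPairSum n N B v (fun x => f (T *ᵥ x)) := by
  simp only [avgPairSum, ← mulVec_mulVec, ← mulVec_add, ← mulVec_sub]

theorem avgPairSum_const_mul (n N : ℕ) (B : Matrix (Fin n) (Fin n) ℝ)
    (v : Fin N → Fin n → ℝ) (c : ℂ) (f : (Fin n → ℝ) → ℂ) :
    avgPairSum n N B v (fun x => c * f x) = c * avgPairSum n N B v f := by
  simp only [avgPairSum, tsum_mul_left, ← Finset.mul_sum]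
  ring

theorem formal_dual_linear_image_general (n N M : ℕ)
    (B C : Matrix (Fin n) (Fin n) ℝ)
    (v : Fin N → Fin n → ℝ) (u : Fin M → Fin n → ℝ) (δ : ℝ)
    (T : Matrix (Fin n) (Fin n) ℝ) (hT : IsUnit T.det)
    (hdual : IsFormalDual n N M B v C u δ) :
    IsFormalDual n N M (T * B) (fun j => T.mulVec (v j))
      ((Tᵀ)⁻¹ * C) (fun j => (Tᵀ)⁻¹.mulVec (u j)) (δ / |T.det|) := by
  intro f
  have hdet : T.det ≠ 0 := hT.ne_zero
  let e : (Fin n → ℝ) ≃L[ℝ] (Fin n → ℝ) :=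
    (T.toLinearEquiv' (T.invertibleOfIsUnitDet hT)).toContinuousLinearEquiv
  let g : SchwartzMap (Fin n → ℝ) ℂ := SchwartzMap.compCLMOfContinuousLinearEquiv ℝ e f
  have hf : (fun y => fourierT n f ((Tᵀ)⁻¹ *ᵥ y)) =
      fun y => ((|T.det| : ℝ) : ℂ) * fourierT n g y :=
    funext (fourierT_inv_transpose_mulVec n hdet f)
  have habs : ((|T.det| : ℝ) : ℂ) ≠ 0 := by exact_mod_cast abs_ne_zero.mpr hdet
  rw [avgPairSum_mul_mulVec, avgPairSum_mul_mulVec, hf, avgPairSum_const_mul]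
  change avgPairSum n N B v g = _
  rw [hdual g]
  push_cast
  field_simp

/-- Formal duality is preserved under invertible linear transformations:
if `P` (density `δ`) and `Q` (density `1/δ`) are formal duals and `T` is
invertible, then `TP` and `(Tᵀ)⁻¹Q` are formal duals with densities
`δ/|det T|` and `|det T|/δ`. -/
theorem formal_dual_linear_image (n N M : ℕ) (hN : 1 ≤ N) (hM : 1 ≤ M)
    (B C : Matrix (Fin n) (Fin n) ℝ) (hB : IsUnit B.det) (hC : IsUnit C.det)
    (v : Fin N → Fin n → ℝ) (u : Fin M → Fin n → ℝ) (δ : ℝ)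
    (hδ : δ = N / |B.det|) (hδ' : 1 / δ = M / |C.det|)
    (T : Matrix (Fin n) (Fin n) ℝ) (hT : IsUnit T.det)
    (hdual : IsFormalDual n N M B v C u δ) :
    IsFormalDual n N M (T * B) (fun j => T.mulVec (v j))
      ((Tᵀ)⁻¹ * C) (fun j => (Tᵀ)⁻¹.mulVec (u j)) (δ / |T.det|) :=
  formal_dual_linear_image_general n N M B C v u δ T hT hdual
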